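/- arXiv:1604.06181 — 6 statements merged into one kernel-verified Lean document; each statement's English description precedes it below -/
import Mathlib

section
/- Let k and m be positive integers with m ≥ k, let G be a k-connected finite simple graph, let C be a (k,m)-CDS of G, and let U ⊆ V(G)∖C. Then no vertex of U is involved in any k-node cut of G[C ∪ U]; that is, for every set S ⊆ C ∪ U with |S| ≤ k such that the induced subgraph G[(C ∪ U)∖S] is disconnected, we have S ∩ U = ∅. -/
/-- A graph `H` is `k`-connected if it has more than `k` vertices and, for every
set `S` of fewer than `k` vertices, deleting `S` leaves a connected graph. -/
def KConnected {W : Type*} (H : SimpleGraph W) (k : ℕ) : Prop :=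
  k < Nat.card W ∧ ∀ S : Set W, S.ncard < k → (H.induce Sᶜ).Connected

/-- `C` is an `m`-fold dominating set of `G` if every vertex outside `C`
has at least `m` neighbors in `C`. -/
def MFoldDominating {V : Type*} (G : SimpleGraph V) (m : ℕ) (C : Set V) : Prop :=
  ∀ v : V, v ∉ C → m ≤ {u ∈ C | G.Adj v u}.ncard

/-- `C` is a `(k,m)`-CDS of `G` if `C` is an `m`-fold dominating set of `G`
and the induced subgraph `G[C]` is `k`-connected. -/
def IsCDS {V : Type*} (G : SimpleGraph V) (k m : ℕ) (C : Set V) : Prop :=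
  MFoldDominating G m C ∧ KConnected (G.induce C) k

/-!
Let `u ∈ S ∩ U`. Since `u ∉ C`, the cut meets `C` in fewer than `k` vertices, so `G[C \ S]` is
still connected by the `k`-connectivity of `G[C]`. Every vertex of `U \ S` has at least
`m ≥ k` neighbours in `C`, hence one in `C \ S`; so `G[(C ∪ U) \ S]` is connected.
-/

namespace SimpleGraph

variable {V : Type*} {G : SimpleGraph V}

lemma connected_induce_of_forall_exists_adj {s t : Set V} (hs : (G.induce s).Connected)
    (hst : s ⊆ t) (hadj : ∀ v ∈ t, v ∉ s → ∃ w ∈ s, G.Adj v w) :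
    (G.induce t).Connected := by
  obtain ⟨⟨u, hu⟩⟩ := hs.nonempty
  refine G.induce_connected_of_patches u (hst hu) fun {v} hv => ?_
  by_cases hvs : v ∈ s
  · exact ⟨s, hst, hu, hvs, hs.preconnected _ _⟩
  obtain ⟨w, hws, hvw⟩ := hadj v hv hvs
  have hconn : (G.induce (s ∪ {v})).Connected :=
    connected_induce_union hs.preconnected (G.induce_singleton_eq_top v ▸ preconnected_top)
      hws rfl hvw.symm
  exact ⟨s ∪ {v}, Set.union_subset hst (Set.singleton_subset_iff.2 hv), Or.inl hu, Or.inr rfl,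
    hconn.preconnected _ _⟩

end SimpleGraph

section

variable {V : Type*} {G : SimpleGraph V}

lemma KConnected.connected_induce_diff {k : ℕ} {C T : Set V} (hC : KConnected (G.induce C) k)
    (hT : (C ∩ T).ncard < k) : (G.induce (C \ T)).Connected := by
  have hcard : (Subtype.val ⁻¹' T : Set C).ncard < k := by
    rwa [← Subtype.preimage_coe_self_inter, Set.ncard_preimage_of_injective_subset_range
      Subtype.val_injective (by simp [Set.inter_subset_left])]
  let f : (G.induce C).induce (Subtype.val ⁻¹' T)ᶜ →g G.induce (C \ T) :=
    ⟨fun x => ⟨x.1.1, x.1.2, x.2⟩, id⟩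
  exact (hC.2 _ hcard).map f fun y => ⟨⟨⟨y.1, y.2.1⟩, y.2.2⟩, rfl⟩

lemma MFoldDominating.exists_adj_diff [Finite V] {m : ℕ} {C T : Set V}
    (hC : MFoldDominating G m C) {v : V} (hv : v ∉ C) (hT : (C ∩ T).ncard < m) :
    ∃ w ∈ C \ T, G.Adj v w := by
  by_contra! h
  have hsub : {w ∈ C | G.Adj v w} ⊆ C ∩ T := fun w ⟨hwC, hvw⟩ =>
    ⟨hwC, by_contra fun hwT => h w ⟨hwC, hwT⟩ hvw⟩
  exact hT.not_ge ((hC v hv).trans (Set.ncard_le_ncard hsub (Set.toFinite _)))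

end

theorem no_U_vertex_in_cut_general {V : Type*} [Fintype V] (G : SimpleGraph V) (k m : ℕ)
    (hm : k ≤ m)
    (C : Set V) (hC : IsCDS G k m C) (U : Set V) (hU : U ⊆ Cᶜ)
    (S : Set V) (hScard : S.ncard ≤ k)
    (hdisc : ¬ (G.induce ((C ∪ U) \ S)).Connected) :
    S ∩ U = ∅ := by
  by_contra hne
  obtain ⟨u, huS, huU⟩ := Set.nonempty_iff_ne_empty.mpr hne
  have hCS : (C ∩ S).ncard < k :=
    (Set.ncard_lt_ncard (Set.inter_subset_right.ssubset_of_mem_notMem huS fun h => hU huU h.1)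
      S.toFinite).trans_le hScard
  refine hdisc (SimpleGraph.connected_induce_of_forall_exists_adj (hC.2.connected_induce_diff hCS)
    (Set.sdiff_subset_sdiff_left Set.subset_union_left) fun v hv hvCS => ?_)
  exact hC.1.exists_adj_diff (fun hvC => hvCS ⟨hvC, hv.2⟩) (hCS.trans_le hm)

/-- If `G` is `k`-connected, `m ≥ k ≥ 1`, `C` is a `(k,m)`-CDS of `G` and
`U ⊆ V(G) \ C`, then no vertex of `U` is involved in any `k`-node cut of
`G[C ∪ U]`: for every `S ⊆ C ∪ U` with `|S| ≤ k` such that `G[(C ∪ U) \ S]`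
is disconnected, we have `S ∩ U = ∅`. -/
theorem no_U_vertex_in_cut {V : Type*} [Fintype V] (G : SimpleGraph V) (k m : ℕ)
    (hk : 0 < k) (hm : k ≤ m) (hG : KConnected G k)
    (C : Set V) (hC : IsCDS G k m C) (U : Set V) (hU : U ⊆ Cᶜ)
    (S : Set V) (hS : S ⊆ C ∪ U) (hScard : S.ncard ≤ k)
    (hdisc : ¬ (G.induce ((C ∪ U) \ S)).Connected) :
    S ∩ U = ∅ :=
  no_U_vertex_in_cut_general G k m hm C hC U hU S hScard hdisc
end

section
/- Let H be a 2-connected finite simple graph which has no good 2-separator. Then H is either 3-connected or a cycle. -/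
/-- Two `u`–`v` paths are internally disjoint if they share no vertices
other than `u` and `v`. -/
def InternallyDisjoint {W : Type*} {H : SimpleGraph W} {u v : W}
    (p q : H.Path u v) : Prop :=
  ∀ x : W, x ∈ p.1.support → x ∈ q.1.support → x = u ∨ x = v

/-- `{u, v}` is a 2-separator of `H`: `u ≠ v` and deleting `{u, v}`
disconnects `H`. -/
def TwoSeparator {W : Type*} (H : SimpleGraph W) (u v : W) : Prop :=
  u ≠ v ∧ ¬ (H.induce ({u, v}ᶜ : Set W)).Connected

/-- A 2-separator `{u, v}` is good if there exist at least three pairwise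
internally disjoint `u`–`v` paths in `H`. -/
def GoodTwoSeparator {W : Type*} (H : SimpleGraph W) (u v : W) : Prop :=
  TwoSeparator H u v ∧
    ∃ p1 p2 p3 : H.Path u v, p1 ≠ p2 ∧ p1 ≠ p3 ∧ p2 ≠ p3 ∧
      InternallyDisjoint p1 p2 ∧ InternallyDisjoint p1 p3 ∧ InternallyDisjoint p2 p3

namespace SimpleGraph

variable {V : Type*} {G : SimpleGraph V} {X Y S : Set V} {u v w x y z : V}

def ReachableIn (G : SimpleGraph V) (X : Set V) (x y : V) : Prop :=
  ∃ p : G.Walk x y, ∀ z ∈ p.support, z ∈ X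

namespace ReachableIn

lemma refl (hx : x ∈ X) : G.ReachableIn X x x := ⟨.nil, by simpa⟩

lemma left_mem (h : G.ReachableIn X x y) : x ∈ X :=
  let ⟨p, hp⟩ := h; hp x p.start_mem_support

lemma right_mem (h : G.ReachableIn X x y) : y ∈ X :=
  let ⟨p, hp⟩ := h; hp y p.end_mem_support

lemma symm (h : G.ReachableIn X x y) : G.ReachableIn X y x :=
  let ⟨p, hp⟩ := h; ⟨p.reverse, by simpa using hp⟩

lemma trans (h₁ : G.ReachableIn X x y) (h₂ : G.ReachableIn X y z) : G.ReachableIn X x z := by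
  obtain ⟨p, hp⟩ := h₁
  obtain ⟨q, hq⟩ := h₂
  exact ⟨p.append q, fun z hz => (Walk.mem_support_append_iff _ _).1 hz |>.elim (hp z) (hq z)⟩

lemma mono (h : G.ReachableIn X x y) (hXY : X ⊆ Y) : G.ReachableIn Y x y :=
  let ⟨p, hp⟩ := h; ⟨p, fun z hz => hXY (hp z hz)⟩

end ReachableIn

lemma Adj.reachableIn (h : G.Adj x y) (hx : x ∈ X) (hy : y ∈ X) : G.ReachableIn X x y :=
  ⟨h.toWalk, by simp [hx, hy]⟩

lemma Walk.reachableIn_of_mem_support [DecidableEq V] (p : G.Walk x y)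
    (hp : ∀ z ∈ p.support, z ∈ X) (hz : z ∈ p.support) : G.ReachableIn X x z :=
  ⟨p.takeUntil z hz, fun w hw => hp w (p.support_takeUntil_subset_support hz hw)⟩

lemma ReachableIn.inter_reachableIn [DecidableEq V] (h : G.ReachableIn X x y) :
    G.ReachableIn (X ∩ {z | G.ReachableIn X x z}) x y := by
  obtain ⟨p, hp⟩ := h
  exact ⟨p, fun z hz => ⟨hp z hz, p.reachableIn_of_mem_support hp hz⟩⟩

lemma ReachableIn.diff_singleton (h : G.ReachableIn X x y) (hv : ¬ G.ReachableIn X x v) :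
    G.ReachableIn (X \ {v}) x y := by
  classical
  exact h.inter_reachableIn.mono fun z ⟨hz, hxz⟩ => ⟨hz, fun hzv => hv (hzv ▸ hxz)⟩

lemma Walk.reachableIn_of_induce {a b : X} (q : (G.induce X).Walk a b) :
    G.ReachableIn X a b := by
  induction q with
  | nil => exact .refl (Subtype.prop _)
  | cons h _ ih => exact ((induce_adj.1 h).reachableIn (Subtype.prop _) (Subtype.prop _)).trans ih

lemma reachableIn_iff_reachable_induce (hx : x ∈ X) (hy : y ∈ X) :
    G.ReachableIn X x y ↔ (G.induce X).Reachable ⟨x, hx⟩ ⟨y, hy⟩ := by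
  constructor
  · rintro ⟨p, hp⟩
    exact ⟨p.induce X hp⟩
  · rintro ⟨q⟩
    exact q.reachableIn_of_induce

lemma ReachableIn.exists_walk_induce_notMem (h : G.ReachableIn (X \ {w}) x y) (hx : x ∈ X)
    (hy : y ∈ X) : ∃ p : (G.induce X).Walk ⟨x, hx⟩ ⟨y, hy⟩, ∀ z ∈ p.support, (z : V) ≠ w := by
  obtain ⟨p, hp⟩ := h
  exact ⟨p.induce X fun z hz => (hp z hz).1, by
    simpa [Walk.support_induce] using fun z (_ : z ∈ X) hz => (hp z hz).2⟩

lemma Walk.exists_reachableIn_adj_of_mem (p : G.Walk x y) (hx : x ∉ S) (hy : y ∈ S) :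
    ∃ c z, G.ReachableIn Sᶜ x c ∧ G.Adj c z ∧ z ∈ S ∧ z ∈ p.support := by
  obtain ⟨d, hd, hfst, hsnd⟩ := p.exists_boundary_dart {w | G.ReachableIn Sᶜ x w}
    (ReachableIn.refl hx) fun h => h.right_mem hy
  refine ⟨d.fst, d.snd, hfst, d.adj, ?_, p.dart_snd_mem_support_of_mem_darts hd⟩
  by_contra hS
  exact hsnd (hfst.trans (d.adj.reachableIn hfst.right_mem hS))

lemma Walk.exists_adj_mem_support (p : G.Walk x y) (hxy : x ≠ y) :
    ∃ z ∈ p.support, G.Adj x z := by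
  cases p with
  | nil => exact absurd rfl hxy
  | cons h q => exact ⟨_, by simp, h⟩

lemma Walk.exists_mem_support_notMem_pair (p : G.Walk x y) (hxy : x ≠ y) (hnadj : ¬ G.Adj x y) :
    ∃ z ∈ p.support, z ∉ ({x, y} : Set V) := by
  obtain ⟨z, hz, hxz⟩ := p.exists_adj_mem_support hxy
  simp only [Set.mem_insert_iff, Set.mem_singleton_iff, not_or]
  exact ⟨z, hz, hxz.ne', fun h => hnadj (h ▸ hxz)⟩

lemma Walk.IsPath.eq_of_mem_takeUntil_of_mem_dropUntil [DecidableEq V] {p : G.Walk u v}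
    (hp : p.IsPath) (hw : w ∈ p.support) (h₁ : x ∈ (p.takeUntil w hw).support)
    (h₂ : x ∈ (p.dropUntil w hw).support) : x = w := by
  by_contra hxw
  rw [← p.take_spec hw] at hp
  exact hp.ne_of_mem_support_of_append hxw h₁ h₂ rfl

lemma exists_internallyDisjoint_of_walks [DecidableEq V] (p q : G.Walk u v)
    (h : ∀ x ∈ p.support, x ∈ q.support → x = u ∨ x = v) :
    ∃ p' q' : G.Path u v, InternallyDisjoint p' q' :=
  ⟨p.toPath, q.toPath, fun x hp hq =>
    h x (p.support_toPath_subset_support hp) (q.support_toPath_subset_support hq)⟩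

end SimpleGraph

open SimpleGraph

namespace InternallyDisjoint

variable {V : Type*} {G : SimpleGraph V} {u v w x z c : V}

lemma symm {p q : G.Path u v} (h : InternallyDisjoint p q) : InternallyDisjoint q p :=
  fun x hq hp => h x hp hq

lemma ne {p q : G.Path u v} (h : InternallyDisjoint p q)
    (hz : z ∈ p.1.support) (hzuv : z ∉ ({u, v} : Set V)) : p ≠ q := by
  rintro rfl
  exact hzuv (by simpa using h z hz hz)

lemma map {W : Type*} {G' : SimpleGraph W} {f : G →g G'}
    (hf : Function.Injective f) {p q : G.Path u v} (h : InternallyDisjoint p q) :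
    InternallyDisjoint (p.map f hf) (q.map f hf) := by
  intro z hp hq
  simp only [SimpleGraph.Path.map_coe, Walk.support_map, List.mem_map] at hp hq
  obtain ⟨a, ha, rfl⟩ := hp
  obtain ⟨b, hb, hab⟩ := hq
  rw [hf hab] at hb
  rcases h a ha hb with h | h <;> simp [h]

lemma exists_of_mem_support [DecidableEq V] {P₁ P₂ : G.Path u w}
    (h : InternallyDisjoint P₁ P₂) (hvw : v ≠ w) (hv : v ∈ P₁.1.support) :
    ∃ p q : G.Path u v, InternallyDisjoint p q := by
  have hP₁ := P₁.2
  refine exists_internallyDisjoint_of_walks (P₁.1.takeUntil v hv)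
    (P₂.1.append (P₁.1.dropUntil v hv).reverse) fun x hx₁ hx₂ => ?_
  rw [Walk.mem_support_append_iff, Walk.support_reverse, List.mem_reverse] at hx₂
  rcases hx₂ with hx₂ | hx₂
  · rcases h x (P₁.1.support_takeUntil_subset_support hv hx₁) hx₂ with rfl | rfl
    · exact Or.inl rfl
    · exact absurd (hP₁.eq_of_mem_takeUntil_of_mem_dropUntil hv hx₁ (Walk.end_mem_support _))
        hvw.symm
  · exact Or.inr (hP₁.eq_of_mem_takeUntil_of_mem_dropUntil hv hx₁ hx₂)

lemma exists_of_mem_support_of_walk [DecidableEq V] {P₁ P₂ : G.Path u w}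
    (h : InternallyDisjoint P₁ P₂) (hwv : G.Adj w v) (hx : x ∈ P₁.1.support) (hxw : x ≠ w)
    (hxc : G.Adj x c) (t : G.Walk c v)
    (ht : ∀ z ∈ t.support, z ∉ P₁.1.support ∧ z ∉ P₂.1.support) :
    ∃ p q : G.Path u v, InternallyDisjoint p q := by
  have hP₁ := P₁.2
  have hw : w ∉ (P₁.1.takeUntil x hx).support := fun hw =>
    hxw (hP₁.eq_of_mem_takeUntil_of_mem_dropUntil hx hw (Walk.end_mem_support _)).symm
  refine exists_internallyDisjoint_of_walks ((P₁.1.takeUntil x hx).append (t.cons hxc))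
    (P₂.1.concat hwv) fun z hz₁ hz₂ => ?_
  rw [Walk.support_concat, List.mem_append, List.mem_singleton] at hz₂
  rcases hz₂ with hz₂ | rfl
  · rw [Walk.mem_support_append_iff, Walk.support_cons, List.mem_cons] at hz₁
    rcases hz₁ with hz₁ | rfl | hz₁
    · rcases h z (P₁.1.support_takeUntil_subset_support hx hz₁) hz₂ with rfl | rfl
      · exact Or.inl rfl
      · exact absurd hz₁ hw
    · rcases h z hx hz₂ with rfl | rfl
      · exact Or.inl rfl
      · exact absurd rfl hxw
    · exact absurd hz₂ (ht z hz₁).2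
  · exact Or.inr rfl

lemma exists_of_adj [DecidableEq V]
    (hdel : ∀ w x y : V, x ≠ w → y ≠ w → ∃ p : G.Walk x y, w ∉ p.support)
    {P₁ P₂ : G.Path u w} (h : InternallyDisjoint P₁ P₂) (hwv : G.Adj w v) (hwu : w ≠ u) :
    ∃ p q : G.Path u v, InternallyDisjoint p q := by
  by_cases hv₁ : v ∈ P₁.1.support
  · exact h.exists_of_mem_support hwv.ne' hv₁
  by_cases hv₂ : v ∈ P₂.1.support
  · exact h.symm.exists_of_mem_support hwv.ne' hv₂
  obtain ⟨R, hR⟩ := hdel w v u hwv.ne' hwu.symm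
  obtain ⟨c, x, ⟨t, ht⟩, hcx, hx, hxR⟩ :=
    R.exists_reachableIn_adj_of_mem (S := {z | z ∈ P₁.1.support ∨ z ∈ P₂.1.support})
      (by simp [hv₁, hv₂]) (Or.inl P₁.1.start_mem_support)
  have hxw : x ≠ w := fun hxw => hR (hxw ▸ hxR)
  have ht' : ∀ z ∈ t.reverse.support, z ∉ P₁.1.support ∧ z ∉ P₂.1.support := by
    simpa [not_or] using ht
  rcases hx with hx | hx
  · exact h.exists_of_mem_support_of_walk hwv hx hxw hcx.symm t.reverse ht'
  · exact h.symm.exists_of_mem_support_of_walk hwv hx hxw hcx.symm t.reverse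
      fun z hz => (ht' z hz).symm

end InternallyDisjoint

theorem SimpleGraph.exists_internallyDisjoint_paths {V : Type*} {G : SimpleGraph V} {u v : V}
    (hdel : ∀ w x y : V, x ≠ w → y ≠ w → ∃ p : G.Walk x y, w ∉ p.support)
    (huv : u ≠ v) (hr : G.Reachable u v) : ∃ p q : G.Path u v, InternallyDisjoint p q := by
  classical
  obtain ⟨p⟩ := hr.symm
  clear hr
  induction p with
  | nil => exact absurd rfl huv
  | @cons v w u hvw p ih =>
    by_cases hwu : w = u
    · subst w
      exact ⟨Path.singleton hvw.symm, Path.singleton hvw.symm, fun z hz _ => by simpa using hz⟩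
    · obtain ⟨P₁, P₂, h⟩ := ih (Ne.symm hwu)
      exact h.exists_of_adj hdel hvw.symm hwu

section Separation

variable {V : Type*} {H : SimpleGraph V} {S : Set V} {u v w x y z c d : V}

def SimpleGraph.Separates (H : SimpleGraph V) (S : Set V) (x y : V) : Prop :=
  x ∉ S ∧ y ∉ S ∧ ¬ H.ReachableIn Sᶜ x y

namespace KConnected

lemma reachableIn_compl_singleton (h2 : KConnected H 2) (hx : x ≠ w) (hy : y ≠ w) :
    H.ReachableIn {w}ᶜ x y :=
  (reachableIn_iff_reachable_induce hx hy).2 ((h2.2 {w} (by simp)).preconnected _ _)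

lemma connected (h2 : KConnected H 2) : H.Connected := by
  have : Nonempty V := (Nat.card_pos_iff.1 (by have := h2.1; omega)).1
  refine (connected_iff H).2 ⟨fun x y => ?_, this⟩
  obtain ⟨p, -⟩ := (reachableIn_iff_reachable_induce (X := (∅ : Set V)ᶜ) (by simp) (by simp)).2
    ((h2.2 ∅ (by simp)).preconnected ⟨x, by simp⟩ ⟨y, by simp⟩)
  exact ⟨p⟩

lemma exists_notMem_pair (h2 : KConnected H 2) (u v : V) : ∃ z, z ∉ ({u, v} : Set V) := by
  by_contra! h
  have := h2.1
  have := Set.ncard_le_ncard (fun z (_ : z ∈ Set.univ) => h z)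
  have := Set.ncard_insert_le u {v}
  simp only [Set.mem_insert_iff, Set.mem_singleton_iff, Set.ncard_univ,
    Set.ncard_singleton] at *
  omega

lemma exists_reachableIn_adj (h2 : KConnected H 2) (huv : u ≠ v)
    (hx : x ∉ ({u, v} : Set V)) : ∃ c, H.ReachableIn {u, v}ᶜ x c ∧ H.Adj c u := by
  obtain ⟨p, hp⟩ := h2.reachableIn_compl_singleton (w := v) (fun h : x = v => hx (by simp [h])) huv
  obtain ⟨c, e, hc, hce, he, hep⟩ :=
    p.exists_reachableIn_adj_of_mem hx (by simp : u ∈ ({u, v} : Set V))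
  obtain rfl | rfl : e = u ∨ e = v := by simpa using he
  · exact ⟨c, hc, hce⟩
  · exact absurd rfl (hp _ hep)

lemma exists_path_through (h2 : KConnected H 2) (huv : u ≠ v)
    (hx : x ∉ ({u, v} : Set V)) :
    ∃ p : H.Path u v, (∀ z ∈ p.1.support, z ∈ ({u, v} : Set V) ∪ {z | H.ReachableIn {u, v}ᶜ x z})
      ∧ ∃ z ∈ p.1.support, H.ReachableIn {u, v}ᶜ x z := by
  classical
  obtain ⟨c, hxc, hcu⟩ := h2.exists_reachableIn_adj huv hx
  obtain ⟨d, hxd, hdv⟩ := h2.exists_reachableIn_adj huv.symm (Set.pair_comm u v ▸ hx)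
  rw [Set.pair_comm] at hxd
  obtain ⟨q, hq⟩ := hxc.symm.trans hxd
  have hq' : ∀ z ∈ q.toPath.1.support, z ∈ ({u, v} : Set V)ᶜ :=
    fun z hz => hq z (q.support_toPath_subset_support hz)
  have hu : u ∉ q.toPath.1.support := fun hu => hq' u hu (by simp)
  have hv : v ∉ q.toPath.1.support := fun hv => hq' v hv (by simp)
  refine ⟨⟨(q.toPath.1.concat hdv).cons hcu.symm, ?_⟩, fun z hz => ?_, c, by simp, hxc⟩
  · rw [Walk.cons_isPath_iff, Walk.support_concat]
    exact ⟨q.toPath.2.concat hv _, by simp [hu, huv]⟩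
  · simp only [Walk.support_cons, Walk.support_concat, List.mem_cons,
      List.mem_append, List.not_mem_nil, or_false] at hz
    rcases hz with rfl | hz | rfl
    · simp
    · exact Or.inr (hxc.trans (q.toPath.1.reachableIn_of_mem_support hq' hz))
    · simp

end KConnected

namespace SimpleGraph.Separates

lemma symm (h : H.Separates S x y) : H.Separates S y x :=
  ⟨h.2.1, h.1, fun h' => h.2.2 h'.symm⟩

lemma twoSeparator (h : H.Separates {u, v} x y) (huv : u ≠ v) : TwoSeparator H u v :=
  ⟨huv, fun hc => h.2.2 ((reachableIn_iff_reachable_induce h.1 h.2.1).2 (hc.preconnected _ _))⟩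

lemma ne (h : H.Separates {u, v} x y) (h2 : KConnected H 2) : u ≠ v := by
  rintro rfl
  simp only [Set.pair_eq_singleton] at h
  exact h.2.2 (h2.reachableIn_compl_singleton h.1 h.2.1)

lemma internallyDisjoint (h : H.Separates {u, v} x y) {p q : H.Path u v}
    (hp : ∀ z ∈ p.1.support, z ∈ ({u, v} : Set V) ∪ {z | H.ReachableIn {u, v}ᶜ x z})
    (hq : ∀ z ∈ q.1.support, z ∈ ({u, v} : Set V) ∪ {z | H.ReachableIn {u, v}ᶜ y z}) :
    InternallyDisjoint p q := by
  intro z hzp hzq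
  rcases hp z hzp with hz | hxz
  · simpa using hz
  rcases hq z hzq with hz | hyz
  · simpa using hz
  exact absurd (hxz.trans hyz.symm) h.2.2

end SimpleGraph.Separates

namespace TwoSeparator

lemma symm (hs : TwoSeparator H u v) : TwoSeparator H v u :=
  ⟨hs.1.symm, Set.pair_comm u v ▸ hs.2⟩

lemma exists_separates (hs : TwoSeparator H u v) (h2 : KConnected H 2) :
    ∃ x y, H.Separates {u, v} x y := by
  by_contra! h
  obtain ⟨z, hz⟩ := h2.exists_notMem_pair u v
  refine hs.2 ((connected_iff _).2 ⟨fun a b => ?_, ⟨⟨z, hz⟩⟩⟩)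
  by_contra hab
  exact h a b ⟨a.2, b.2, fun h' => hab ((reachableIn_iff_reachable_induce a.2 b.2).1 h')⟩

lemma goodTwoSeparator (hs : TwoSeparator H u v) {p₁ p₂ p₃ : H.Path u v}
    (h₁₂ : InternallyDisjoint p₁ p₂) (h₁₃ : InternallyDisjoint p₁ p₃)
    (h₂₃ : InternallyDisjoint p₂ p₃) (hz : z ∈ p₁.1.support) (hzuv : z ∉ ({u, v} : Set V))
    (hw : w ∈ p₂.1.support) (hwuv : w ∉ ({u, v} : Set V)) : GoodTwoSeparator H u v :=
  ⟨hs, p₁, p₂, p₃, h₁₂.ne hz hzuv, h₁₃.ne hz hzuv, h₂₃.ne hw hwuv, h₁₂, h₁₃, h₂₃⟩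

end TwoSeparator

lemma SimpleGraph.ReachableIn.exists_mem_support_reachableIn_diff
    (hxz : H.ReachableIn {u, v}ᶜ x z) {e : V} (p : H.Walk z e) (he : e ∈ ({u, v} : Set V))
    (hw : w ∉ p.support) :
    ∃ e' ∈ ({u, v} : Set V), e' ∈ p.support ∧
      H.ReachableIn (({u, v} ∪ {z | H.ReachableIn {u, v}ᶜ x z}) \ {w}) z e' := by
  classical
  have hz : z ∉ insert w ({u, v} : Set V) := by
    rintro (rfl | hz)
    exacts [hw p.start_mem_support, hxz.right_mem hz]
  obtain ⟨c, e', hzc, hce, he', he'p⟩ :=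
    p.exists_reachableIn_adj_of_mem hz (Set.mem_insert_of_mem _ he)
  have he'w : e' ≠ w := fun h => hw (h ▸ he'p)
  have he'uv : e' ∈ ({u, v} : Set V) := (Set.mem_insert_iff.1 he').resolve_left he'w
  have hzc' : H.ReachableIn (({u, v} ∪ {z | H.ReachableIn {u, v}ᶜ x z}) \ {w}) z c := by
    refine hzc.inter_reachableIn.mono fun a ⟨ha, hza⟩ => ?_
    simp only [Set.mem_compl_iff, Set.mem_insert_iff, not_or] at ha
    exact ⟨Or.inr (hxz.trans (hza.mono (Set.compl_subset_compl.2 (Set.subset_insert _ _)))), ha.1⟩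
  exact ⟨e', he'uv, he'p, hzc'.trans (hce.reachableIn hzc'.right_mem ⟨Or.inl he'uv, he'w⟩)⟩

namespace SimpleGraph.Separates

lemma not_adj (h : H.Separates {u, v} x y) (hno : ∀ u v : V, ¬ GoodTwoSeparator H u v)
    (h2 : KConnected H 2) : ¬ H.Adj u v := by
  intro hadj
  have huv := h.ne h2
  obtain ⟨p, hp, z, hz, hxz⟩ := h2.exists_path_through huv h.1
  obtain ⟨q, hq, w, hw, hyw⟩ := h2.exists_path_through huv h.2.1
  have hr : ∀ {s : H.Path u v}, InternallyDisjoint s (Path.singleton hadj) :=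
    fun z _ hz => by simpa using hz
  exact hno u v ((h.twoSeparator huv).goodTwoSeparator (h.internallyDisjoint hp hq) hr hr
    hz hxz.right_mem hw hyw.right_mem)

lemma reachableIn_or (h : H.Separates {u, v} x y) (hno : ∀ u v : V, ¬ GoodTwoSeparator H u v)
    (h2 : KConnected H 2) (hz : z ∉ ({u, v} : Set V)) :
    H.ReachableIn {u, v}ᶜ x z ∨ H.ReachableIn {u, v}ᶜ y z := by
  by_contra! hxz
  have huv := h.ne h2
  obtain ⟨p, hp, a, ha, hxa⟩ := h2.exists_path_through huv h.1
  obtain ⟨q, hq, b, hb, hyb⟩ := h2.exists_path_through huv h.2.1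
  obtain ⟨r, hr, -⟩ := h2.exists_path_through huv hz
  exact hno u v ((h.twoSeparator huv).goodTwoSeparator (h.internallyDisjoint hp hq)
    (Separates.internallyDisjoint ⟨h.1, hz, hxz.1⟩ hp hr)
    (Separates.internallyDisjoint ⟨h.2.1, hz, hxz.2⟩ hq hr) ha hxa.right_mem hb hyb.right_mem)

theorem exists_cutVertex (h : H.Separates {u, v} x y)
    (hno : ∀ u v : V, ¬ GoodTwoSeparator H u v) (h2 : KConnected H 2) :
    ∃ b, H.ReachableIn {u, v}ᶜ x b ∧
      ¬ H.ReachableIn (({u, v} ∪ {z | H.ReachableIn {u, v}ᶜ x z}) \ {b}) u v := by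
  classical
  set T : Set V := {u, v} ∪ {z | H.ReachableIn {u, v}ᶜ x z}
  by_contra! hcut
  have huv := h.ne h2
  have hexit : ∀ w, ∀ a ∈ T \ {w}, ∃ e ∈ ({u, v} : Set V), e ≠ w ∧ H.ReachableIn (T \ {w}) a e := by
    rintro w a ⟨ha | ha, haw⟩
    · exact ⟨a, ha, haw, .refl ⟨Or.inl ha, haw⟩⟩
    · obtain ⟨e, he, hew⟩ : ∃ e ∈ ({u, v} : Set V), e ≠ w := by
        by_cases hu : u = w
        exacts [⟨v, by simp, hu ▸ huv.symm⟩, ⟨u, by simp, hu⟩]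
      obtain ⟨p, hp⟩ := h2.reachableIn_compl_singleton haw hew
      obtain ⟨e', he', he'p, hae'⟩ :=
        ha.exists_mem_support_reachableIn_diff p he fun hw => hp w hw rfl
      exact ⟨e', he', hp e' he'p, hae'⟩
  have hconn : ∀ w ∈ T, ∀ a ∈ T \ {w}, ∀ a' ∈ T \ {w}, H.ReachableIn (T \ {w}) a a' := by
    intro w hw a ha a' ha'
    obtain ⟨e, he, hew, hae⟩ := hexit w a ha
    obtain ⟨e', he', he'w, hae'⟩ := hexit w a' ha'
    refine hae.trans (ReachableIn.trans ?_ hae'.symm)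
    have huv' : w ≠ u → w ≠ v → H.ReachableIn (T \ {w}) u v := fun hwu hwv =>
      hcut w (hw.resolve_left (by simp [hwu, hwv]))
    simp only [Set.mem_insert_iff, Set.mem_singleton_iff] at he he'
    rcases he with rfl | rfl <;> rcases he' with rfl | rfl
    exacts [.refl hae.right_mem, huv' hew.symm he'w.symm, (huv' he'w.symm hew.symm).symm,
      .refl hae.right_mem]
  have hu : u ∈ T := Or.inl (by simp)
  have hv : v ∈ T := Or.inl (by simp)
  have hxu : x ≠ u := fun hxu => h.1 (by simp [hxu])
  have hxv : x ≠ v := fun hxv => h.1 (by simp [hxv])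
  have hx : x ∈ T := Or.inr (.refl h.1)
  obtain ⟨P, Q, hPQ⟩ := exists_internallyDisjoint_paths (G := H.induce T) (u := ⟨u, hu⟩)
    (v := ⟨v, hv⟩)
    (fun w a b haw hbw => (hconn w w.2 a ⟨a.2, fun h => haw (Subtype.ext h)⟩ b
      ⟨b.2, fun h => hbw (Subtype.ext h)⟩).exists_walk_induce_notMem a.2 b.2 |>.imp
        fun _ hp hw => hp w hw rfl)
    (fun h => huv (congrArg Subtype.val h))
    ((reachableIn_iff_reachable_induce hu hv).1
      ((hconn x hx u ⟨hu, hxu.symm⟩ v ⟨hv, hxv.symm⟩).mono Set.sdiff_subset))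
  have hf : Function.Injective (Embedding.induce (G := H) T).toHom :=
    (Embedding.induce (G := H) T).injective
  have hPT : ∀ R : (H.induce T).Path ⟨u, hu⟩ ⟨v, hv⟩, ∀ z ∈ (R.map _ hf).1.support, z ∈ T := by
    intro R z hz
    simp only [Path.map_coe, Walk.support_map, List.mem_map] at hz
    obtain ⟨a, -, rfl⟩ := hz
    exact a.2
  have hnadj := h.not_adj hno h2
  obtain ⟨r, hr, -⟩ := h2.exists_path_through huv h.2.1
  obtain ⟨a, ha, hauv⟩ := (P.map _ hf).1.exists_mem_support_notMem_pair huv hnadj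
  obtain ⟨b, hb, hbuv⟩ := (Q.map _ hf).1.exists_mem_support_notMem_pair huv hnadj
  exact hno u v ((h.twoSeparator huv).goodTwoSeparator (hPQ.map hf)
    (h.internallyDisjoint (hPT P) hr) (h.internallyDisjoint (hPT Q) hr) ha hauv hb hbuv)

theorem eq_of_adj_of_adj [Finite V] (h : H.Separates {u, v} x y)
    (hno : ∀ u v : V, ¬ GoodTwoSeparator H u v) (h2 : KConnected H 2)
    (hc : H.ReachableIn {u, v}ᶜ x c) (hd : H.ReachableIn {u, v}ᶜ x d)
    (huc : H.Adj u c) (hud : H.Adj u d) : c = d := by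
  induction hn : {z | H.ReachableIn {u, v}ᶜ x z}.ncard using Nat.strong_induction_on
    generalizing v x y c d with
  | _ n ih =>
  by_contra hcd
  have huv := h.ne h2
  obtain ⟨b, hxb, hcut⟩ := h.exists_cutVertex hno h2
  have hbu : b ≠ u := fun hbu => hxb.right_mem (by simp [hbu])
  have hbv : b ≠ v := fun hbv => hxb.right_mem (by simp [hbv])
  have hsep : ∀ a, H.ReachableIn {u, v}ᶜ x a → H.Adj u a → a ≠ b → H.Separates {u, b} a v := by
    intro a hxa hua hab
    refine ⟨by simp [hua.ne', hab], by simp [huv.symm, hbv.symm], fun hav => hcut ?_⟩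
    obtain ⟨p, hp⟩ := hav
    obtain ⟨e, he, hep, hae⟩ :=
      hxa.exists_mem_support_reachableIn_diff p (by simp) fun hb => hp b hb (by simp)
    obtain rfl : e = v := by
      simp only [Set.mem_insert_iff, Set.mem_singleton_iff] at he
      exact he.resolve_left fun heu => hp e hep (by simp [heu])
    exact ReachableIn.trans (hua.reachableIn ⟨Or.inl (by simp), hbu.symm⟩ hae.left_mem) hae
  wlog hcb : c ≠ b generalizing c d
  · exact this hd hc hud huc (Ne.symm hcd) fun hdb => hcd ((not_not.1 hcb).trans hdb.symm)
  have hsc := hsep c hc huc hcb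
  have hub : ¬ H.Adj u b := hsc.not_adj hno h2
  have hsd := hsep d hd hud fun hdb => hub (hdb ▸ hud)
  have hcd' : H.ReachableIn {u, b}ᶜ c d :=
    (hsc.reachableIn_or hno h2 hsd.1).resolve_right fun hvd => hsd.2.2 hvd.symm
  refine hcd (ih _ ?_ hsc (.refl hsc.1) hcd' huc hud rfl)
  rw [← hn]
  refine Set.ncard_lt_ncard ((Set.ssubset_iff_of_subset fun a hca => ?_).2 ⟨b, hxb, ?_⟩)
  · refine hc.trans ((hca.diff_singleton hsc.2.2).mono fun z hz => ?_)
    simp only [Set.mem_sdiff, Set.mem_compl_iff, Set.mem_insert_iff, Set.mem_singleton_iff,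
      not_or] at hz ⊢
    exact ⟨hz.1.1, hz.2⟩
  · exact fun hcb' => hcb'.right_mem (by simp)

end SimpleGraph.Separates

namespace TwoSeparator

theorem exists_neighborSet_eq [Finite V] (hs : TwoSeparator H u v)
    (hno : ∀ u v : V, ¬ GoodTwoSeparator H u v) (h2 : KConnected H 2) :
    ∃ c d, c ≠ d ∧ H.neighborSet u = {c, d} ∧ TwoSeparator H c d := by
  obtain ⟨x, y, h⟩ := hs.exists_separates h2
  obtain ⟨c, hxc, hcu⟩ := h2.exists_reachableIn_adj hs.1 h.1
  obtain ⟨d, hyd, hdu⟩ := h2.exists_reachableIn_adj hs.1 h.2.1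
  have hcd : c ≠ d := by
    rintro rfl
    exact h.2.2 (hxc.trans hyd.symm)
  have hN : H.neighborSet u = {c, d} := by
    ext a
    simp only [mem_neighborSet, Set.mem_insert_iff, Set.mem_singleton_iff]
    constructor
    · intro hua
      have ha : a ∉ ({u, v} : Set V) := by
        simp only [Set.mem_insert_iff, Set.mem_singleton_iff, not_or]
        exact ⟨hua.ne', fun hav => h.not_adj hno h2 (hav ▸ hua)⟩
      rcases h.reachableIn_or hno h2 ha with hxa | hya
      · exact Or.inl (h.eq_of_adj_of_adj hno h2 hxa hxc hua hcu.symm)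
      · exact Or.inr (h.symm.eq_of_adj_of_adj hno h2 hya hyd hua hdu.symm)
    · rintro (rfl | rfl)
      exacts [hcu.symm, hdu.symm]
  refine ⟨c, d, hcd, hN, Separates.twoSeparator (x := u) (y := v) ⟨?_, ?_, fun huv => ?_⟩ hcd⟩
  · simp [hcu.ne', hdu.ne']
  · have hvc : v ≠ c := fun hvc => hxc.right_mem (by simp [hvc])
    have hvd : v ≠ d := fun hvd => hyd.right_mem (by simp [hvd])
    simp [hvc, hvd]
  · obtain ⟨p, hp⟩ := huv
    obtain ⟨a, hap, hua⟩ := p.exists_adj_mem_support hs.1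
    exact hp a hap (hN ▸ hua)

lemma exists_twoSeparator [Finite V] (hs : TwoSeparator H u v)
    (hno : ∀ u v : V, ¬ GoodTwoSeparator H u v) (h2 : KConnected H 2) (w : V) :
    ∃ w', TwoSeparator H w w' := by
  obtain ⟨p⟩ := h2.connected.preconnected u w
  induction p generalizing v with
  | nil => exact ⟨v, hs⟩
  | cons hua p ih =>
    obtain ⟨c, d, -, hN, hcd⟩ := hs.exists_neighborSet_eq hno h2
    have hmem := (H.mem_neighborSet _ _).2 hua
    rw [hN] at hmem
    rcases hmem with rfl | rfl
    exacts [ih hcd, ih hcd.symm]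

end TwoSeparator

namespace KConnected

lemma card_eq_three_or_exists_twoSeparator (h2 : KConnected H 2)
    (h3 : ¬ KConnected H 3) : Nat.card V = 3 ∨ ∃ u v, TwoSeparator H u v := by
  simp only [KConnected, not_and_or, not_lt, not_forall] at h3
  rcases h3 with h3 | ⟨S, hS, hconn⟩
  · exact Or.inl (by have := h2.1; omega)
  · obtain ⟨u, v, huv, rfl⟩ : ∃ u v, u ≠ v ∧ S = {u, v} :=
      Set.ncard_eq_two.1 (by by_contra h; exact hconn (h2.2 S (by omega)))
    exact Or.inr ⟨u, v, huv, hconn⟩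

lemma ncard_neighborSet_of_card_eq_three [Finite V] (h2 : KConnected H 2)
    (h3 : Nat.card V = 3) (w : V) : (H.neighborSet w).ncard = 2 := by
  have hadj : ∀ a b, a ≠ b → ({w}ᶜ : Set V) = {a, b} → H.Adj w a := by
    intro a b hab hw
    have ha : a ∈ ({w}ᶜ : Set V) := hw ▸ by simp
    have hb : b ∈ ({w}ᶜ : Set V) := hw ▸ by simp
    obtain ⟨p, hp⟩ := h2.reachableIn_compl_singleton (Ne.symm hb) hab
    obtain ⟨n, hn, hwn⟩ := p.exists_adj_mem_support (Ne.symm ha)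
    have hn' : n ∈ ({a, b} : Set V) := hw ▸ hwn.ne'
    rcases hn' with rfl | rfl
    · exact hwn
    · exact absurd rfl (hp _ hn)
  obtain ⟨a, b, hab, hw⟩ := Set.ncard_eq_two.1
    (show ({w}ᶜ : Set V).ncard = 2 by rw [Set.ncard_compl, Set.ncard_singleton, h3])
  have hN : H.neighborSet w = {a, b} := by
    ext n
    refine ⟨fun hwn => hw ▸ (hwn.ne' : n ∈ ({w}ᶜ : Set V)), ?_⟩
    rintro (hn | hn) <;> rw [hn]
    exacts [hadj _ _ hab hw, hadj _ _ hab.symm (Set.pair_comm a b ▸ hw)]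
  rw [hN, Set.ncard_pair hab]

end KConnected

end Separation

/-- A 2-connected finite simple graph with no good 2-separator is either
3-connected or a cycle (connected with every vertex of degree exactly 2). -/
theorem no_good_separator_three_connected_or_cycle {V : Type*} [Fintype V]
    (H : SimpleGraph V) (h2 : KConnected H 2)
    (hno : ∀ u v : V, ¬ GoodTwoSeparator H u v) :
    KConnected H 3 ∨ (H.Connected ∧ ∀ v : V, {u : V | H.Adj v u}.ncard = 2) := by
  by_cases h3 : KConnected H 3
  · exact Or.inl h3
  refine Or.inr ⟨h2.connected, fun w => ?_⟩
  rcases h2.card_eq_three_or_exists_twoSeparator h3 with hcard | ⟨u, v, hs⟩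
  · exact h2.ncard_neighborSet_of_card_eq_three hcard w
  · obtain ⟨w', hw'⟩ := hs.exists_twoSeparator hno h2 w
    obtain ⟨c, d, hcd, hN, -⟩ := hw'.exists_neighborSet_eq hno h2
    exact (congrArg Set.ncard hN).trans (Set.ncard_pair hcd)
end

section
/- Let H be a 2-connected finite simple graph and let S = {u,v} be a 2-separator of H. Let K be the vertex set of a connected component of H − S, and let H' be the graph on vertex set K ∪ {u,v} in which two vertices x, y are adjacent if and only if xy is an edge of H or {x,y} = {u,v}. Then H' is 2-connected. -/
/-- `K` is the vertex set of a connected component of `H − {u,v}`: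
`K` avoids `u, v`, is nonempty, induces a connected subgraph, and is closed
under adjacency within the complement of `{u, v}`. -/
def IsComponentOfDeletion {W : Type*} (H : SimpleGraph W) (u v : W) (K : Set W) : Prop :=
  K ⊆ ({u, v} : Set W)ᶜ ∧ K.Nonempty ∧ (H.induce K).Connected ∧
    ∀ x ∈ K, ∀ y ∈ ({u, v} : Set W)ᶜ, H.Adj x y → y ∈ K

/-! After deleting a vertex `w`, fix `t ∈ {u, v}` with `t ≠ w`. Any vertex of `K` is joined to `t`
by a path of `H − w`; where this path first leaves `K` it must enter `{u, v}`, since `K` is closed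
under adjacency outside `{u, v}`, and the virtual edge joins `u` to `v`. Hence every vertex of
`H' − w` reaches `t`. -/

open SimpleGraph

theorem Set.image_val_compl_singleton {V : Type*} (s : Set V) (w : s) :
    Subtype.val '' ({w}ᶜ : Set s) = s \ {w.1} := by
  ext x
  simp

namespace SimpleGraph

variable {V : Type*}

theorem Reachable.mem_of_adj_closed {G : SimpleGraph V} {A : Set V}
    (hA : ∀ ⦃x y⦄, x ∈ A → G.Adj x y → y ∈ A) {x y : V} (h : G.Reachable x y) (hx : x ∈ A) :
    y ∈ A := by
  obtain ⟨p⟩ := h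
  induction p with
  | nil => exact hx
  | cons hxy _ ih => exact ih (hA hx hxy)

noncomputable def induceInduceIso (G : SimpleGraph V) (s : Set V) (t : Set s) :
    (G.induce s).induce t ≃g G.induce (Subtype.val '' t) where
  toEquiv := Equiv.Set.image Subtype.val t Subtype.val_injective
  map_rel_iff' := Iff.rfl

end SimpleGraph

theorem kConnected_two_iff {W : Type*} (H : SimpleGraph W) :
    KConnected H 2 ↔ 2 < Nat.card W ∧ ∀ w, (H.induce {w}ᶜ).Connected := by
  refine ⟨fun h => ⟨h.1, fun w => h.2 {w} (by simp)⟩, fun ⟨hcard, hdel⟩ => ⟨hcard, fun S hS => ?_⟩⟩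
  have : Finite W := Nat.finite_of_card_ne_zero (by omega)
  obtain hS0 | hS1 : S.ncard = 0 ∨ S.ncard = 1 := by omega
  · rw [(Set.ncard_eq_zero).mp hS0]
    have avoid : ∀ a b : W, ∃ w, w ∉ ({a, b} : Set W) := fun a b =>
      (Set.ne_univ_iff_exists_notMem _).mp fun h => by
        have := Set.ncard_insert_le a {b}
        rw [h, Set.ncard_univ, Set.ncard_singleton] at this
        omega
    obtain ⟨a⟩ : Nonempty W := Nat.card_pos_iff.mp (by omega) |>.1
    have : Nonempty (∅ᶜ : Set W) := ⟨⟨a, by simp⟩⟩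
    refine Connected.mk fun x y => ?_
    obtain ⟨w, hw⟩ := avoid x y
    simp only [Set.mem_insert_iff, Set.mem_singleton_iff, not_or] at hw
    exact ((hdel w).preconnected ⟨x, Ne.symm hw.1⟩ ⟨y, Ne.symm hw.2⟩).map
      (H.induceHomOfLE (Set.compl_subset_compl.mpr (Set.empty_subset _))).toHom
  · obtain ⟨w, rfl⟩ := Set.ncard_eq_one.mp hS1
    exact hdel w

section MarkedComponent

variable {V : Type*} {H : SimpleGraph V} {u v w : V} {K : Set V}

theorem connected_induce_sup_edge_diff (hH : (H.induce {w}ᶜ).Preconnected) (huv : u ≠ v)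
    (hcl : ∀ x ∈ K, ∀ y ∈ ({u, v} : Set V)ᶜ, H.Adj x y → y ∈ K) :
    ((H ⊔ fromEdgeSet {s(u, v)}).induce ((K ∪ {u, v}) \ {w})).Connected := by
  set R := (K ∪ {u, v}) \ {w}
  set G := (H ⊔ fromEdgeSet {s(u, v)}).induce R
  obtain ⟨t, ht, htw⟩ : ∃ t ∈ ({u, v} : Set V), t ≠ w := by
    by_cases huw : u = w
    · exact ⟨v, by simp, fun h => huv (huw.trans h.symm)⟩
    · exact ⟨u, by simp, huw⟩
  have htR : t ∈ R := ⟨Or.inr ht, htw⟩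
  have pair_reach : ∀ z (hz : z ∈ R), z ∈ ({u, v} : Set V) → G.Reachable ⟨z, hz⟩ ⟨t, htR⟩ := by
    intro z hz hzuv
    by_cases hzt : z = t
    · subst hzt; rfl
    · refine Adj.reachable (Or.inr ((fromEdgeSet_adj _).mpr ⟨?_, hzt⟩))
      simp only [Set.mem_insert_iff, Set.mem_singleton_iff] at ht hzuv ⊢
      rcases ht with rfl | rfl <;> rcases hzuv with rfl | rfl <;> simp_all [Sym2.eq_swap]
  let A : Set ({w}ᶜ : Set V) := {z | ∀ hz : z.1 ∈ R, G.Reachable ⟨z, hz⟩ ⟨t, htR⟩}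
  have hA : ∀ ⦃z z'⦄, z ∈ A → (H.induce {w}ᶜ).Adj z z' → z' ∈ A := by
    intro z z' hz hzz' hz'
    by_cases hzT : z.1 ∈ K ∪ {u, v}
    · exact (Adj.reachable (Or.inl hzz'.symm)).trans (hz ⟨hzT, z.2⟩)
    · refine pair_reach _ hz' (hz'.1.resolve_left fun hz'K => hzT (Or.inl ?_))
      exact hcl _ hz'K _ (fun h => hzT (Or.inr h)) hzz'.symm
  have reach_t : ∀ z : R, G.Reachable z ⟨t, htR⟩ := fun z =>
    (hH ⟨t, htw⟩ ⟨z, z.2.2⟩).mem_of_adj_closed hA (fun _ => Reachable.refl _) z.2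
  have : Nonempty R := ⟨⟨t, htR⟩⟩
  exact Connected.mk fun x y => (reach_t x).trans (reach_t y).symm

end MarkedComponent

theorem marked_component_two_connected_general {V : Type*}
    (H : SimpleGraph V) (h2 : KConnected H 2) (u v : V) (huv : u ≠ v)
    (K : Set V) (hK : IsComponentOfDeletion H u v K) :
    KConnected ((H ⊔ SimpleGraph.fromEdgeSet {s(u, v)}).induce (K ∪ {u, v})) 2 := by
  rw [kConnected_two_iff] at h2 ⊢
  obtain ⟨hcard, hdel⟩ := h2
  have : Finite V := Nat.finite_of_card_ne_zero (by omega)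
  obtain ⟨hKuv, ⟨k, hk⟩, -, hcl⟩ := hK
  have hkuv : k ≠ u ∧ k ≠ v := by simpa [not_or] using hKuv hk
  refine ⟨?_, fun w => ?_⟩
  · rw [Nat.card_coe_set_eq]
    calc 2 < ({k, u, v} : Set V).ncard := by
          rw [Set.ncard_eq_three.mpr ⟨k, u, v, hkuv.1, hkuv.2, huv, rfl⟩]; omega
      _ ≤ (K ∪ {u, v}).ncard :=
          Set.ncard_le_ncard (Set.insert_subset (Or.inl hk) Set.subset_union_right)
  · rw [(induceInduceIso _ _ _).connected_iff, Set.image_val_compl_singleton]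
    exact connected_induce_sup_edge_diff (hdel w).preconnected huv hcl

/-- Marked `S`-components are 2-connected: if `H` is 2-connected, `{u,v}` is a
2-separator of `H`, `K` is the vertex set of a connected component of
`H − {u,v}`, and `H'` is the graph induced on `K ∪ {u,v}` with an extra
(virtual) edge `uv`, then `H'` is 2-connected. -/
theorem marked_component_two_connected {V : Type*} [Fintype V]
    (H : SimpleGraph V) (h2 : KConnected H 2) (u v : V) (huv : u ≠ v)
    (hsep : ¬ (H.induce (({u, v} : Set V)ᶜ)).Connected)
    (K : Set V) (hK : IsComponentOfDeletion H u v K) :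
    KConnected ((H ⊔ SimpleGraph.fromEdgeSet {s(u, v)}).induce (K ∪ {u, v})) 2 :=
  marked_component_two_connected_general H h2 u v huv K hK
end

section
/- Let m ≥ 3 be an integer, let G be a finite simple graph, let C ⊆ D ⊆ V(G) be vertex sets such that C is an m-fold dominating set of G and the induced subgraph G[D] is 3-connected. Suppose S ⊆ C with |S| = 2 is such that the induced subgraph on C∖S is disconnected, and let W be the vertex set of one connected component of the induced subgraph on C∖S, with W' = C∖(S ∪ W) nonempty. Then there exist vertices a ∈ W and b ∈ W' and a path in G from a to b which has at most two internal vertices, all of whose internal vertices lie in D∖C. -/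
theorem MFoldDominating.exists_adj_mem_diff {V : Type*} {G : SimpleGraph V} {m : ℕ} {C S : Set V}
    (h : MFoldDominating G m C) (hS : S.Finite) (hSm : S.ncard < m) {v : V} (hv : v ∉ C) :
    ∃ u ∈ C \ S, G.Adj v u := by
  by_contra! hno
  have hsub : {u ∈ C | G.Adj v u} ⊆ S := fun u ⟨huC, hvu⟩ => by
    by_contra huS
    exact hno u ⟨huC, huS⟩ hvu
  have := Set.ncard_le_ncard hsub hS
  have := h v hv
  omega

theorem KConnected.exists_walk_support_subset_diff {V : Type*} {G : SimpleGraph V} {D S : Set V}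
    {k : ℕ} (h : KConnected (G.induce D) k) (hS : S.Finite) (hSk : S.ncard < k) {a b : V}
    (ha : a ∈ D \ S) (hb : b ∈ D \ S) :
    ∃ p : G.Walk a b, ∀ v ∈ p.support, v ∈ D \ S := by
  set S₀ : Set D := Subtype.val ⁻¹' S
  have hS₀ : S₀.ncard < k :=
    (Set.ncard_le_ncard_of_injOn Subtype.val (fun _ hx => hx) Subtype.val_injective.injOn
      hS).trans_lt hSk
  obtain ⟨p⟩ := (h.2 S₀ hS₀).preconnected (⟨⟨a, ha.1⟩, ha.2⟩ : ↥S₀ᶜ) ⟨⟨b, hb.1⟩, hb.2⟩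
  let f : (G.induce D).induce S₀ᶜ →g G :=
    (SimpleGraph.Embedding.induce D).toHom.comp (SimpleGraph.Embedding.induce S₀ᶜ).toHom
  refine ⟨p.map f, fun v hv => ?_⟩
  obtain ⟨x, -, rfl⟩ := List.mem_map.mp (SimpleGraph.Walk.support_map f p ▸ hv)
  exact ⟨x.1.2, x.2⟩

namespace SimpleGraph

variable {V : Type*} {G : SimpleGraph V}

theorem exists_walk_length_le_one_of_eq_or_adj {u v : V} (h : u = v ∨ G.Adj u v) :
    ∃ p : G.Walk u v, p.length ≤ 1 ∧ ∀ y ∈ p.support, y = u ∨ y = v := by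
  rcases h with rfl | h
  · exact ⟨.nil, by simp, by simp⟩
  · exact ⟨h.toWalk, by simp, by simp⟩

theorem exists_short_path_through_adj {U : Set V} {w x z c : V}
    (hwx : w = x ∨ (x ∈ U ∧ G.Adj w x)) (hxz : G.Adj x z) (hzc : z = c ∨ (z ∈ U ∧ G.Adj z c)) :
    ∃ p : G.Walk w c, p.IsPath ∧ p.support.length ≤ 4 ∧
      ∀ v ∈ p.support, v ≠ w → v ≠ c → v ∈ U := by
  classical
  obtain ⟨p₁, hp₁, hs₁⟩ := exists_walk_length_le_one_of_eq_or_adj (hwx.imp_right And.right)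
  obtain ⟨p₂, hp₂, hs₂⟩ := exists_walk_length_le_one_of_eq_or_adj (hzc.imp_right And.right)
  let q := p₁.append (.cons hxz p₂)
  have hq : q.length ≤ 3 := by
    simp only [q, Walk.length_append, Walk.length_cons]
    omega
  refine ⟨q.bypass, q.bypass_isPath, ?_, fun v hv hvw hvc => ?_⟩
  · rw [Walk.length_support]
    have := q.length_bypass_le_length
    omega
  · rcases (Walk.mem_support_append_iff _ _).mp (q.support_bypass_subset_support hv) with hv | hv
    · rcases hs₁ v hv with rfl | rfl
      · exact absurd rfl hvw
      · exact (hwx.resolve_left hvw.symm).1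
    · rcases List.mem_cons.mp hv with rfl | hv
      · exact (hwx.resolve_left hvw.symm).1
      · rcases hs₂ v hv with rfl | rfl
        · exact (hzc.resolve_left hvc).1
        · exact absurd rfl hvc

theorem Walk.exists_short_path_of_support_subset_union {T U W : Set V} (hUT : Disjoint U T)
    (hU : ∀ u ∈ U, ∃ t ∈ T, G.Adj u t) {a b : V} (q : G.Walk a b) (ha : a ∈ W) (hb : b ∈ T \ W)
    (hq : ∀ v ∈ q.support, v ∈ T ∪ U) :
    ∃ a' ∈ W, ∃ b' ∈ T \ W, ∃ p : G.Walk a' b', p.IsPath ∧ p.support.length ≤ 4 ∧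
      ∀ v ∈ p.support, v ≠ a' → v ≠ b' → v ∈ U := by
  set attached : Set V := {x | ∃ w ∈ W, w = x ∨ (x ∈ U ∧ G.Adj w x)}
  have hb_attached : b ∉ attached := by
    rintro ⟨w, hw, rfl | ⟨hbU, -⟩⟩
    · exact hb.2 hw
    · exact hUT.ne_of_mem hbU hb.1 rfl
  obtain ⟨d, hd, ⟨w, hw, hwx⟩, hz⟩ := q.exists_boundary_dart attached ⟨a, ha, .inl rfl⟩ hb_attached
  obtain ⟨c, hc, hzc⟩ : ∃ c ∈ T \ W, d.snd = c ∨ (d.snd ∈ U ∧ G.Adj d.snd c) := by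
    rcases hq _ (q.dart_snd_mem_support_of_mem_darts hd) with hzT | hzU
    · exact ⟨d.snd, ⟨hzT, fun hzW => hz ⟨_, hzW, .inl rfl⟩⟩, .inl rfl⟩
    · obtain ⟨c, hcT, hzc⟩ := hU _ hzU
      exact ⟨c, ⟨hcT, fun hcW => hz ⟨c, hcW, .inr ⟨hzU, hzc.symm⟩⟩⟩, .inr ⟨hzU, hzc⟩⟩
  exact ⟨w, hw, c, hc, exists_short_path_through_adj hwx d.adj hzc⟩

end SimpleGraph

theorem short_path_across_separator_general {V : Type*} (G : SimpleGraph V)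
    (m : ℕ) (hm : 3 ≤ m) (C D : Set V) (hCD : C ⊆ D)
    (hdom : MFoldDominating G m C) (hD3 : KConnected (G.induce D) 3)
    (S : Set V) (hScard : S.ncard = 2)
    (W : Set V)
    (hWsub : W ⊆ C \ S) (hWne : W.Nonempty)
    (hW'ne : (C \ (S ∪ W)).Nonempty) :
    ∃ a ∈ W, ∃ b ∈ C \ (S ∪ W), ∃ p : G.Walk a b, p.IsPath ∧
      p.support.length ≤ 4 ∧
      ∀ x ∈ p.support, x ≠ a → x ≠ b → x ∈ D \ C := by
  have hS : S.Finite := Set.finite_of_ncard_ne_zero (by omega)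
  obtain ⟨a, ha⟩ := hWne
  obtain ⟨b, hb⟩ := hW'ne
  rw [← Set.sdiff_sdiff] at hb ⊢
  obtain ⟨q, hq⟩ := hD3.exists_walk_support_subset_diff hS (by omega)
    ⟨hCD (hWsub ha).1, (hWsub ha).2⟩ ⟨hCD hb.1.1, hb.1.2⟩
  refine q.exists_short_path_of_support_subset_union (T := C \ S)
    (Set.disjoint_sdiff_left.mono_right Set.sdiff_subset)
    (fun u hu => hdom.exists_adj_mem_diff hS (by omega) hu.2) ha hb fun v hv => ?_
  by_cases hvC : v ∈ C
  · exact .inl ⟨hvC, (hq v hv).2⟩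
  · exact .inr ⟨(hq v hv).1, hvC⟩

/-- Let `m ≥ 3`, let `C ⊆ D` with `C` an `m`-fold dominating set of `G` and
`G[D]` 3-connected. If `S ⊆ C`, `|S| = 2`, the induced subgraph on `C \ S` is
disconnected, `W` is the vertex set of one connected component of the induced
subgraph on `C \ S`, and `W' = C \ (S ∪ W)` is nonempty, then there are
vertices `a ∈ W`, `b ∈ W'` and a path of `G` from `a` to `b` with at most two
internal vertices, all of whose internal vertices lie in `D \ C`. -/
theorem short_path_across_separator {V : Type*} [Fintype V] (G : SimpleGraph V)
    (m : ℕ) (hm : 3 ≤ m) (C D : Set V) (hCD : C ⊆ D)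
    (hdom : MFoldDominating G m C) (hD3 : KConnected (G.induce D) 3)
    (S : Set V) (hSC : S ⊆ C) (hScard : S.ncard = 2)
    (hdisc : ¬ (G.induce (C \ S)).Connected)
    (W : Set V)
    (hWsub : W ⊆ C \ S) (hWne : W.Nonempty) (hWconn : (G.induce W).Connected)
    (hWclosed : ∀ x ∈ W, ∀ y ∈ C \ S, G.Adj x y → y ∈ W)
    (hW'ne : (C \ (S ∪ W)).Nonempty) :
    ∃ a ∈ W, ∃ b ∈ C \ (S ∪ W), ∃ p : G.Walk a b, p.IsPath ∧
      p.support.length ≤ 4 ∧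
      ∀ x ∈ p.support, x ≠ a → x ≠ b → x ∈ D \ C :=
  short_path_across_separator_general G m hm C D hCD hdom hD3 S hScard W hWsub hWne hW'ne
end

section
/- Let t > 0 be a real number, let a_0 ≥ a_1 ≥ ⋯ ≥ a_n be a nonincreasing sequence of real numbers with a_0 ≥ 2t and a_n ≤ 2t, and let x_1, …, x_n be real numbers such that for every i with 1 ≤ i ≤ n: if a_{i−1} ≥ 2t then x_i ≤ 2t·(a_{i−1} − a_i)/a_{i−1}, and if a_{i−1} < 2t then x_i ≤ a_{i−1} − a_i. Then x_1 + x_2 + ⋯ + x_n ≤ 2t − a_n + 2t·ln(a_0/(2t)). -/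
/-!
With `c = 2t`, the sum telescopes along the potential `F = truncLogPotential c`, the
antiderivative of `min 1 (c / s)` normalised by `F c = c`: each admissible `x (i+1)` is at most
`F (a i) - F (a (i+1))`. Above `c` this increment is `c * log (s / s') ≥ c * (1 - s' / s)`,
by `log y ≥ 1 - 1/y`; below `c` it is `s - s'` itself.
-/

open Real Finset

noncomputable def truncLogPotential (c s : ℝ) : ℝ :=
  if c ≤ s then c + c * log (s / c) else s

namespace truncLogPotential

variable {c s s' : ℝ}

theorem of_le (hcs : c ≤ s) : truncLogPotential c s = c + c * log (s / c) :=
  if_pos hcs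

theorem of_lt (hsc : s < c) : truncLogPotential c s = s :=
  if_neg hsc.not_ge

theorem self (hc : 0 < c) : truncLogPotential c c = c := by
  rw [of_le le_rfl, div_self hc.ne', log_one, mul_zero, add_zero]

theorem of_le_self (hc : 0 < c) (hsc : s ≤ c) : truncLogPotential c s = s :=
  hsc.lt_or_eq.elim of_lt fun h => by rw [h, self hc]

theorem mul_sub_div_le_sub (hc : 0 < c) (hcs : c ≤ s) :
    c * (s - s') / s ≤ truncLogPotential c s - truncLogPotential c s' := by
  have hs : 0 < s := hc.trans_le hcs
  have hlog : 1 - c / s ≤ log (s / c) := by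
    simpa [inv_div] using one_sub_inv_le_log_of_pos (div_pos hs hc)
  rw [of_le hcs]
  rcases le_or_gt c s' with hcs' | hs'c
  · have hs' : 0 < s' := hc.trans_le hcs'
    have hlog' : 1 - s' / s ≤ log (s / s') := by
      simpa [inv_div] using one_sub_inv_le_log_of_pos (div_pos hs hs')
    have hsplit : log (s / c) - log (s' / c) = log (s / s') := by
      rw [← log_div (div_pos hs hc).ne' (div_pos hs' hc).ne', div_div_div_cancel_right₀ hc.ne']
    calc c * (s - s') / s = c * (1 - s' / s) := by field_simp
      _ ≤ c * log (s / s') := by gcongr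
      _ = c + c * log (s / c) - truncLogPotential c s' := by
        rw [of_le hcs', ← hsplit]; ring
  · rw [of_lt hs'c]
    -- `c (s - s') / s = c (1 - c/s) + (c/s) (c - s')`, and `c/s ≤ 1`.
    have hcs_le_one : c / s ≤ 1 := (div_le_one hs).mpr hcs
    calc c * (s - s') / s = c * (1 - c / s) + c / s * (c - s') := by field_simp; ring
      _ ≤ c * log (s / c) + 1 * (c - s') := by gcongr
      _ = c + c * log (s / c) - s' := by ring

theorem le_sub_of_cases (hc : 0 < c) (hs's : s' ≤ s) {y : ℝ}
    (hy_ge : c ≤ s → y ≤ c * (s - s') / s) (hy_lt : s < c → y ≤ s - s') :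
    y ≤ truncLogPotential c s - truncLogPotential c s' := by
  rcases le_or_gt c s with hcs | hsc
  · exact (hy_ge hcs).trans (mul_sub_div_le_sub hc hcs)
  · rw [of_lt hsc, of_lt (hs's.trans_lt hsc)]
    exact hy_lt hsc

end truncLogPotential

/-- Second case of the integral-comparison estimate: if
`a 0 ≥ a 1 ≥ ⋯ ≥ a n` with `a 0 ≥ 2t` and `a n ≤ 2t`, and for all `i < n`,
`x (i+1) ≤ 2t·(a i − a (i+1))/(a i)` when `a i ≥ 2t`, and
`x (i+1) ≤ a i − a (i+1)` when `a i < 2t`, then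
`∑_{i<n} x (i+1) ≤ 2t − a n + 2t·ln(a 0/(2t))`. -/
theorem greedy_sum_le_mixed (t : ℝ) (ht : 0 < t) (n : ℕ) (a x : ℕ → ℝ)
    (hmono : ∀ i < n, a (i + 1) ≤ a i)
    (ha0 : 2 * t ≤ a 0) (han : a n ≤ 2 * t)
    (hx : ∀ i < n,
      (2 * t ≤ a i → x (i + 1) ≤ 2 * t * (a i - a (i + 1)) / a i) ∧
      (a i < 2 * t → x (i + 1) ≤ a i - a (i + 1))) :
    ∑ i ∈ Finset.range n, x (i + 1) ≤ 2 * t - a n + 2 * t * Real.log (a 0 / (2 * t)) := by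
  have hc : 0 < 2 * t := by positivity
  calc ∑ i ∈ range n, x (i + 1)
      ≤ ∑ i ∈ range n,
          (truncLogPotential (2 * t) (a i) - truncLogPotential (2 * t) (a (i + 1))) := by
        refine sum_le_sum fun i hi => ?_
        have hi : i < n := mem_range.mp hi
        exact truncLogPotential.le_sub_of_cases hc (hmono i hi) (hx i hi).1 (hx i hi).2
    _ = truncLogPotential (2 * t) (a 0) - truncLogPotential (2 * t) (a n) := sum_range_sub' _ _
    _ = 2 * t - a n + 2 * t * log (a 0 / (2 * t)) := by
        rw [truncLogPotential.of_le ha0, truncLogPotential.of_le_self hc han]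
        ring
end

section
/- Let t > 0 be a real number, let b_0 ≥ b_1 ≥ ⋯ ≥ b_n ≥ 0 be a nonincreasing sequence of nonnegative real numbers with b_0 ≥ t and b_n ≤ t, and let x_1, …, x_n be real numbers such that for every i with 1 ≤ i ≤ n: if b_{i−1} ≥ t then x_i ≤ 2t·(b_{i−1} − b_i)/b_{i−1}, and if b_{i−1} < t then x_i ≤ 2·(b_{i−1} − b_i). Then x_1 + x_2 + ⋯ + x_n ≤ 2·(t − b_n) + 2t·ln(b_0/t). -/
/-!
The potential `F = greedyPotential t`, i.e. `F s = 2t·ln(s/t)` for `s ≥ t` and `F s = 2(s - t)`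
for `s < t`, is concave with slope `2` below `t` and `2t/s` above it. The hypothesis on `x_{i+1}`
says that `x_{i+1}` is at most the slope of `F` at `b_i` times `b_i - b_{i+1}`, which by concavity
is at most `F b_i - F b_{i+1}`. Summing telescopes to `F b_0 - F b_n = 2t·ln(b_0/t) + 2(t - b_n)`.
-/

open Real Finset

lemma sub_div_le_log_div {s s' : ℝ} (hs : 0 < s) (hs' : 0 < s') :
    (s - s') / s ≤ log (s / s') := by
  have h := one_sub_inv_le_log_of_pos (div_pos hs hs')
  rwa [inv_div, one_sub_div hs.ne'] at h

noncomputable def greedyPotential (t s : ℝ) : ℝ :=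
  if t ≤ s then 2 * t * log (s / t) else 2 * (s - t)

section greedyPotential

variable {t s : ℝ}

lemma mul_log_div_le_sub (ht : 0 < t) (hs : 0 < s) : t * log (s / t) ≤ s - t := by
  have h := log_le_sub_one_of_pos (div_pos hs ht)
  calc t * log (s / t) ≤ t * (s / t - 1) := by gcongr
    _ = s - t := by field_simp

lemma greedyPotential_of_le (h : s ≤ t) : greedyPotential t s = 2 * (s - t) := by
  rcases h.lt_or_eq with h | rfl
  · simp [greedyPotential, not_le.2 h]
  · simp [greedyPotential]

lemma greedyPotential_of_ge (h : t ≤ s) : greedyPotential t s = 2 * t * log (s / t) :=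
  if_pos h

lemma mul_sub_div_le_greedyPotential_sub (ht : 0 < t) (hs : t ≤ s) (s' : ℝ) :
    2 * t * (s - s') / s ≤ greedyPotential t s - greedyPotential t s' := by
  have hs₀ : 0 < s := ht.trans_le hs
  rw [greedyPotential_of_ge hs]
  rcases le_or_gt t s' with hs' | hs'
  · have hs'₀ : 0 < s' := ht.trans_le hs'
    rw [greedyPotential_of_ge hs']
    calc 2 * t * (s - s') / s = 2 * t * ((s - s') / s) := by ring
      _ ≤ 2 * t * log (s / s') := by gcongr; exact sub_div_le_log_div hs₀ hs'₀
      _ = 2 * t * log (s / t) - 2 * t * log (s' / t) := by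
        rw [log_div hs₀.ne' hs'₀.ne', log_div hs₀.ne' ht.ne', log_div hs'₀.ne' ht.ne']; ring
  · rw [greedyPotential_of_le hs'.le]
    have hts : t / s ≤ 1 := (div_le_one hs₀).2 hs
    have hlog : (s - t) / s ≤ log (s / t) := sub_div_le_log_div hs₀ ht
    calc 2 * t * (s - s') / s = 2 * t * ((s - t) / s) + 2 * (t / s) * (t - s') := by
          field_simp; ring
      _ ≤ 2 * t * log (s / t) + 2 * 1 * (t - s') := by
        gcongr
      _ = 2 * t * log (s / t) - 2 * (s' - t) := by ring

lemma two_mul_sub_le_greedyPotential_sub (ht : 0 < t) (hs : s < t) (s' : ℝ) :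
    2 * (s - s') ≤ greedyPotential t s - greedyPotential t s' := by
  rw [greedyPotential_of_le hs.le]
  rcases le_or_gt t s' with hs' | hs'
  · rw [greedyPotential_of_ge hs']
    linarith [mul_log_div_le_sub ht (ht.trans_le hs')]
  · rw [greedyPotential_of_le hs'.le]
    exact le_of_eq (by ring)

end greedyPotential

theorem greedy_sum_le_mixed'_general (t : ℝ) (ht : 0 < t) (n : ℕ) (b x : ℕ → ℝ)
    (hb0 : t ≤ b 0) (hbn : b n ≤ t)
    (hx : ∀ i < n,
      (t ≤ b i → x (i + 1) ≤ 2 * t * (b i - b (i + 1)) / b i) ∧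
      (b i < t → x (i + 1) ≤ 2 * (b i - b (i + 1)))) :
    ∑ i ∈ Finset.range n, x (i + 1) ≤ 2 * (t - b n) + 2 * t * Real.log (b 0 / t) := by
  have step : ∀ i ∈ range n,
      x (i + 1) ≤ greedyPotential t (b i) - greedyPotential t (b (i + 1)) := by
    intro i hi
    have hx := hx i (mem_range.1 hi)
    rcases le_or_gt t (b i) with h | h
    · exact (hx.1 h).trans (mul_sub_div_le_greedyPotential_sub ht h _)
    · exact (hx.2 h).trans (two_mul_sub_le_greedyPotential_sub ht h _)
  calc ∑ i ∈ range n, x (i + 1)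
      ≤ ∑ i ∈ range n, (greedyPotential t (b i) - greedyPotential t (b (i + 1))) :=
        sum_le_sum step
    _ = greedyPotential t (b 0) - greedyPotential t (b n) := sum_range_sub' _ n
    _ = 2 * (t - b n) + 2 * t * log (b 0 / t) := by
      rw [greedyPotential_of_ge hb0, greedyPotential_of_le hbn]; ring

/-- Integral-comparison estimate: if `b 0 ≥ b 1 ≥ ⋯ ≥ b n ≥ 0` with `b 0 ≥ t`
and `b n ≤ t`, and for all `i < n`,
`x (i+1) ≤ 2t·(b i − b (i+1))/(b i)` when `b i ≥ t`, and
`x (i+1) ≤ 2·(b i − b (i+1))` when `b i < t`, then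
`∑_{i<n} x (i+1) ≤ 2·(t − b n) + 2t·ln(b 0 / t)`. -/
theorem greedy_sum_le_mixed' (t : ℝ) (ht : 0 < t) (n : ℕ) (b x : ℕ → ℝ)
    (hnonneg : ∀ i ≤ n, 0 ≤ b i)
    (hmono : ∀ i < n, b (i + 1) ≤ b i)
    (hb0 : t ≤ b 0) (hbn : b n ≤ t)
    (hx : ∀ i < n,
      (t ≤ b i → x (i + 1) ≤ 2 * t * (b i - b (i + 1)) / b i) ∧
      (b i < t → x (i + 1) ≤ 2 * (b i - b (i + 1)))) :
    ∑ i ∈ Finset.range n, x (i + 1) ≤ 2 * (t - b n) + 2 * t * Real.log (b 0 / t) :=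
  greedy_sum_le_mixed'_general t ht n b x hb0 hbn hx
end
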